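/- arXiv:math/0505214 — 8 statements merged into one kernel-verified Lean document; each statement's English description precedes it below -/
import Mathlib

section
/- Let t > 0. The closure of S^t in the normed space (Ω, ‖·‖_Ω) is exactly the set {f ∈ Ω : for all s ∈ (0,t), f(−s) − f(−t) ≥ b + c₂t − c₁s}. -/
/-!
The path space Ω of the paper consists of the continuous ω : ℝ → ℝ with ω 0 = 0 and
ω t / (1 + |t|) → 0 as t → ±∞, normed by ‖ω‖_Ω = sup_t |ω t| / (1 + |t|).
Via the isometric bijection g t = ω t / (1 + |t|), the normed space (Ω, ‖·‖_Ω) is exactly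
the subspace {g ∈ C₀(ℝ, ℝ) : g 0 = 0} of the space of continuous functions vanishing at
infinity with the sup norm; the path value is recovered as ω t = g t * (1 + |t|).
-/

open Set
open scoped ZeroAtInfty

/-- The path space Ω, realized isometrically inside `C₀(ℝ, ℝ)`. -/
def OmegaSpace : Set C₀(ℝ, ℝ) := {g | g 0 = 0}

/-- The value ω(t) of the path ω ∈ Ω represented by `g`. -/
noncomputable def pathVal (g : OmegaSpace) (t : ℝ) : ℝ := (g : C₀(ℝ, ℝ)) t * (1 + |t|)

/-- The set `S^t` of paths: for all s ∈ (0,t), f(−s) − f(−t) > b + c₂t − c₁s. -/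
def St (b c₁ c₂ t : ℝ) : Set OmegaSpace :=
  {f | ∀ s ∈ Ioo (0 : ℝ) t, pathVal f (-s) - pathVal f (-t) > b + c₂ * t - c₁ * s}

/-!
Point evaluations are continuous on Ω, so the weak inequalities cut out a closed set containing
`S^t`. Conversely, if `f` satisfies the weak inequalities, then adding `ε` times a tent function
supported on `[-t, 0]` leaves `f(-t)` unchanged and strictly raises every `f(-s)`, `s ∈ (0, t)`;
these perturbations lie in `S^t` and tend to `f` as `ε → 0⁺`.
-/

open Filter Topology

theorem continuous_pathVal (x : ℝ) : Continuous fun f : OmegaSpace => pathVal f x :=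
  ((continuous_eval_const x).comp (ZeroAtInftyContinuousMap.isometry_toBCF.continuous.comp
    continuous_subtype_val)).mul continuous_const

theorem isClosed_setOf_forall_pathVal_sub_ge (t : ℝ) (I : Set ℝ) (a : ℝ → ℝ) :
    IsClosed {f : OmegaSpace | ∀ s ∈ I, pathVal f (-s) - pathVal f (-t) ≥ a s} := by
  simp only [ofPred_forall]
  exact isClosed_biInter fun s _ =>
    isClosed_le continuous_const ((continuous_pathVal (-s)).sub (continuous_pathVal (-t)))

noncomputable def tent (t : ℝ) : C₀(ℝ, ℝ) where
  toFun u := max 0 (min (u + t) (-u))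
  continuous_toFun := by fun_prop
  zero_at_infty' := HasCompactSupport.is_zero_at_infty <|
    HasCompactSupport.intro (isCompact_Icc (a := -t) (b := 0)) fun u hu => by
      rw [mem_Icc, not_and_or, not_le, not_le] at hu
      rcases hu with hu | hu
      · exact max_eq_left ((min_le_left _ _).trans (by linarith))
      · exact max_eq_left ((min_le_right _ _).trans (by linarith))

theorem tent_apply (t u : ℝ) : tent t u = max 0 (min (u + t) (-u)) := rfl

theorem tent_zero (t : ℝ) : tent t 0 = 0 := by
  simp [tent_apply]

theorem tent_neg_self (t : ℝ) : tent t (-t) = 0 := by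
  simp [tent_apply]

theorem tent_neg_pos {t s : ℝ} (hs : s ∈ Ioo 0 t) : 0 < tent t (-s) := by
  rw [tent_apply, lt_max_iff, neg_neg, lt_min_iff]
  exact Or.inr ⟨by linarith [hs.2], hs.1⟩

noncomputable def addTent (t ε : ℝ) (f : OmegaSpace) : OmegaSpace :=
  ⟨f + ε • tent t, by simp [OmegaSpace, f.2.out, tent_zero]⟩

theorem pathVal_addTent (t ε : ℝ) (f : OmegaSpace) (x : ℝ) :
    pathVal (addTent t ε f) x = pathVal f x + ε * tent t x * (1 + |x|) := by
  simp only [pathVal, addTent, ZeroAtInftyContinuousMap.add_apply,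
    ZeroAtInftyContinuousMap.smul_apply, smul_eq_mul]
  ring

theorem addTent_zero (t : ℝ) (f : OmegaSpace) : addTent t 0 f = f := by
  simp [addTent]

theorem continuous_addTent (t : ℝ) (f : OmegaSpace) : Continuous fun ε => addTent t ε f :=
  (continuous_const.add (continuous_id.smul continuous_const)).subtype_mk _

theorem addTent_mem_St {b c₁ c₂ t ε : ℝ} {f : OmegaSpace} (hε : 0 < ε)
    (hf : ∀ s ∈ Ioo (0 : ℝ) t, pathVal f (-s) - pathVal f (-t) ≥ b + c₂ * t - c₁ * s) :
    addTent t ε f ∈ St b c₁ c₂ t := by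
  intro s hs
  have hbump : 0 < ε * tent t (-s) * (1 + |-s|) := by
    have := tent_neg_pos hs
    positivity
  rw [pathVal_addTent, pathVal_addTent, tent_neg_self, mul_zero, zero_mul, add_zero]
  linarith [hf s hs]

theorem closure_St_general (b c₁ c₂ t : ℝ) :
    closure (St b c₁ c₂ t) =
      {f : OmegaSpace | ∀ s ∈ Ioo (0 : ℝ) t,
        pathVal f (-s) - pathVal f (-t) ≥ b + c₂ * t - c₁ * s} := by
  refine (closure_minimal (fun f hf s hs => (hf s hs).le)
    (isClosed_setOf_forall_pathVal_sub_ge t _ _)).antisymm fun f hf => ?_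
  have hlim : Tendsto (fun ε => addTent t ε f) (𝓝[>] 0) (𝓝 f) := by
    simpa only [addTent_zero] using
      ((continuous_addTent t f).tendsto 0).mono_left nhdsWithin_le_nhds
  exact mem_closure_of_tendsto hlim
    (eventually_nhdsWithin_of_forall fun ε hε => addTent_mem_St hε hf)

/-- Equation (32) of the paper: the closure of `S^t` in (Ω, ‖·‖_Ω) is the set of paths
satisfying the corresponding weak inequalities. -/
theorem closure_St (b c₁ c₂ t : ℝ) (hb : 0 < b) (hc₂ : 0 < c₂) (hc : c₂ < c₁) (ht : 0 < t) :
    closure (St b c₁ c₂ t) =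
      {f : OmegaSpace | ∀ s ∈ Ioo (0 : ℝ) t,
        pathVal f (-s) - pathVal f (-t) ≥ b + c₂ * t - c₁ * s} :=
  closure_St_general b c₁ c₂ t
end

section
/- The closure of S in the normed space (Ω, ‖·‖_Ω) equals the union over t ≥ t₀ of the sets {f ∈ Ω : for all s ∈ (0,t), f(−s) − f(−t) ≥ b + c₂t − c₁s} (each such set being the closure of S^t). -/
/-!
The path space Ω of the paper consists of the continuous ω : ℝ → ℝ with ω 0 = 0 and
ω t / (1 + |t|) → 0 as t → ±∞, normed by ‖ω‖_Ω = sup_t |ω t| / (1 + |t|).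
Via the isometric bijection g t = ω t / (1 + |t|), the normed space (Ω, ‖·‖_Ω) is exactly
the subspace {g ∈ C₀(ℝ, ℝ) : g 0 = 0} of the space of continuous functions vanishing at
infinity with the sup norm; the path value is recovered as ω t = g t * (1 + |t|).
-/

open Set
open scoped ZeroAtInfty

/-!
For a path `f` write `F s = f (-s)` and `D_t s = F s - F t - (b + c₂ t - c₁ s)`. The right-hand
side consists of the paths with `D_t ≥ 0` on `(0, t)` for some `t ≥ t₀`, and
`D_t t = (c₁ - c₂) t - b` is positive exactly when `t > t₀`.

Closedness: letting `s → 0` gives `f (-t) ≤ -(b + c₂ t)`. Paths are `o(t)` at `-∞`, uniformly on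
a small ball, so the admissible times are locally bounded and the union is locally the
projection of a closed set along a compact interval of times.

Density: from `D_t ≥ 0` on `(0, t)` pass to `t' = t + κ`. Continuity of `F` at `t` keeps
`D_{t'} > -η` on `(0, t')`, and now `D_{t'} t' > 0`, so `D_{t'} > 0` on some `(a, t']`. Lowering
`F` by `η` beyond `a`, along a continuous ramp, makes `D_{t'}` positive on all of `(0, t')`.
-/

open Filter Topology Metric

section PathVal

@[fun_prop]
lemma Continuous.pathVal {X : Type*} [TopologicalSpace X] {f : X → OmegaSpace} {t : X → ℝ}
    (hf : Continuous f) (ht : Continuous t) : Continuous fun x => pathVal (f x) (t x) := by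
  unfold _root_.pathVal
  have hbcf : Continuous fun x => ((f x : C₀(ℝ, ℝ)).toBCF) :=
    ZeroAtInftyContinuousMap.isometry_toBCF.continuous.comp (continuous_subtype_val.comp hf)
  exact (continuous_eval.comp (hbcf.prodMk ht)).mul (by fun_prop)

lemma pathVal_zero (f : OmegaSpace) : pathVal f 0 = 0 := by
  simp [pathVal, show (f : C₀(ℝ, ℝ)) 0 = 0 from f.2]

lemma abs_pathVal_sub_le (f g : OmegaSpace) (x : ℝ) :
    |pathVal f x - pathVal g x| ≤ dist f g * (1 + |x|) := by
  rw [pathVal, pathVal, ← sub_mul, abs_mul, abs_of_pos (by positivity : (0 : ℝ) < 1 + |x|)]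
  gcongr
  rw [Subtype.dist_eq, ← ZeroAtInftyContinuousMap.dist_toBCF_eq_dist, ← Real.dist_eq]
  exact BoundedContinuousFunction.dist_coe_le_dist (f := (f : C₀(ℝ, ℝ)).toBCF)
    (g := (g : C₀(ℝ, ℝ)).toBCF) x

lemma exists_pathVal_eq_add (f : OmegaSpace) {φ : ℝ → ℝ} (hφ : Continuous φ) (hφ0 : φ 0 = 0)
    {M : ℝ} (hM : ∀ x, |φ x| ≤ M) :
    ∃ g : OmegaSpace, dist f g ≤ M ∧ ∀ x, pathVal g x = pathVal f x + φ x := by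
  have hpos : ∀ x : ℝ, 0 < 1 + |x| := fun x => by positivity
  have hq : ∀ x, |φ x / (1 + |x|)| ≤ M := fun x => by
    rw [abs_div, abs_of_pos (hpos x), div_le_iff₀ (hpos x)]
    nlinarith [hM x, abs_nonneg (φ x), abs_nonneg x]
  have hdecay : Tendsto (fun x => φ x / (1 + |x|)) (cocompact ℝ) (𝓝 0) := by
    have hgrow : Tendsto (fun x : ℝ => 1 + |x|) (cocompact ℝ) atTop :=
      tendsto_atTop_add_const_left _ 1 tendsto_norm_cocompact_atTop
    refine squeeze_zero_norm (fun x => ?_) (by simpa using hgrow.inv_tendsto_atTop.const_mul M)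
    rw [Real.norm_eq_abs, abs_div, abs_of_pos (hpos x), div_eq_mul_inv]
    gcongr
    exact hM x
  have hcont : Continuous fun x => φ x / (1 + |x|) := hφ.div (by fun_prop) fun x => (hpos x).ne'
  let q : C₀(ℝ, ℝ) := ⟨⟨_, hcont⟩, hdecay⟩
  have hq_apply : ∀ x, q x = φ x / (1 + |x|) := fun _ => rfl
  refine ⟨⟨(f : C₀(ℝ, ℝ)) + q, by
    simp [OmegaSpace, show (f : C₀(ℝ, ℝ)) 0 = 0 from f.2, hq_apply, hφ0]⟩, ?_, fun x => ?_⟩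
  · rw [Subtype.dist_eq, dist_self_add_right, ← ZeroAtInftyContinuousMap.norm_toBCF_eq_norm,
      BoundedContinuousFunction.norm_le ((abs_nonneg _).trans (hM 0))]
    exact hq
  · simp only [pathVal, ZeroAtInftyContinuousMap.add_apply, hq_apply, add_mul]
    rw [div_mul_cancel₀ _ (hpos x).ne']

lemma eventually_forall_mem_ball_lt_pathVal_neg (f : OmegaSpace) {ε : ℝ} (hε : 0 < ε) :
    ∀ᶠ t in atTop, ∀ g ∈ ball f ε, -(2 * ε * (1 + t)) < pathVal g (-t) := by
  have hf : Tendsto (fun t => (f : C₀(ℝ, ℝ)) (-t)) atTop (𝓝 0) :=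
    ((f : C₀(ℝ, ℝ)).zero_at_infty'.mono_left
      (by rw [cocompact_eq_atBot_atTop]; exact le_sup_left)).comp tendsto_neg_atTop_atBot
  filter_upwards [(tendsto_order.1 hf).1 (-ε) (neg_lt_zero.2 hε), eventually_ge_atTop 0]
    with t hft ht g hg
  have hfar : |pathVal g (-t) - pathVal f (-t)| ≤ dist g f * (1 + t) := by
    simpa [abs_of_nonneg ht] using abs_pathVal_sub_le g f (-t)
  have hval : pathVal f (-t) = (f : C₀(ℝ, ℝ)) (-t) * (1 + t) := by simp [pathVal, abs_of_nonneg ht]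
  have hdist : dist g f < ε := hg
  nlinarith [(abs_le.1 hfar).1]

end PathVal

def StLe (b c₁ c₂ t : ℝ) : Set OmegaSpace :=
  {f | ∀ s ∈ Ioo (0 : ℝ) t, pathVal f (-s) - pathVal f (-t) ≥ b + c₂ * t - c₁ * s}

section Closed

variable {b c₁ c₂ : ℝ}

lemma St_subset_StLe (t : ℝ) : St b c₁ c₂ t ⊆ StLe b c₁ c₂ t :=
  fun _ hf s hs => (hf s hs).le

lemma isClosed_setOf_mem_StLe : IsClosed {p : OmegaSpace × ℝ | p.1 ∈ StLe b c₁ c₂ p.2} := by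
  have hK : {p : OmegaSpace × ℝ | p.1 ∈ StLe b c₁ c₂ p.2} = ⋂ s, {p | 0 < s ∧ s < p.2 →
      b + c₂ * p.2 - c₁ * s ≤ pathVal p.1 (-s) - pathVal p.1 (-p.2)} := by
    ext
    simp [StLe]
  rw [hK]
  exact isClosed_iInter fun s => isClosed_imp
    (isOpen_const.and (isOpen_lt continuous_const continuous_snd))
    (isClosed_le (by fun_prop) (by fun_prop))

lemma isClosed_biUnion_Icc_StLe (t₀ T : ℝ) : IsClosed (⋃ t ∈ Icc t₀ T, StLe b c₁ c₂ t) := by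
  have hK : IsClosed {p : OmegaSpace × Icc t₀ T | p.1 ∈ StLe b c₁ c₂ p.2} :=
    isClosed_setOf_mem_StLe.preimage
      (continuous_fst.prodMk (continuous_subtype_val.comp continuous_snd))
  convert isClosedMap_fst_of_compactSpace _ hK
  ext f
  simp

lemma pathVal_neg_le_of_mem_StLe {t : ℝ} (ht : 0 < t) {f : OmegaSpace} (hf : f ∈ StLe b c₁ c₂ t) :
    pathVal f (-t) ≤ -(b + c₂ * t) := by
  have hlim :
      Tendsto (fun s => pathVal f (-s) - pathVal f (-t)) (𝓝[>] 0) (𝓝 (-pathVal f (-t))) := by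
    have : Continuous fun s => pathVal f (-s) - pathVal f (-t) := by fun_prop
    exact tendsto_nhdsWithin_of_tendsto_nhds (this.tendsto' 0 _ (by simp [pathVal_zero]))
  have hrhs : Tendsto (fun s => b + c₂ * t - c₁ * s) (𝓝[>] 0) (𝓝 (b + c₂ * t)) := by
    have : Continuous fun s => b + c₂ * t - c₁ * s := by fun_prop
    exact tendsto_nhdsWithin_of_tendsto_nhds (this.tendsto' 0 _ (by simp))
  have := le_of_tendsto_of_tendsto hrhs hlim
    (eventually_of_mem (Ioo_mem_nhdsGT ht) fun s hs => hf s hs)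
  linarith

lemma isClosed_biUnion_Ici_StLe (hb : 0 ≤ b) (hc₂ : 0 < c₂) {t₀ : ℝ} (ht₀ : 0 < t₀) :
    IsClosed (⋃ t ∈ Ici t₀, StLe b c₁ c₂ t) := by
  refine isClosed_of_closure_subset fun f hf => ?_
  obtain ⟨T, hT⟩ := (eventually_forall_mem_ball_lt_pathVal_neg f
    (by positivity : 0 < c₂ / 4)).exists_forall_of_atTop
  have hbounded : ∀ g ∈ ball f (c₂ / 4), ∀ t ≥ t₀, g ∈ StLe b c₁ c₂ t → t ≤ max T 1 := by
    intro g hg t ht hgt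
    by_contra! hTt
    -- `-(c₂ / 2) (1 + t) < g (-t) ≤ -(b + c₂ t)` forces `t < 1`
    have hlow := hT t ((le_max_left T 1).trans hTt.le) g hg
    have hup := pathVal_neg_le_of_mem_StLe (ht₀.trans_le ht) hgt
    nlinarith [mul_lt_mul_of_pos_left ((le_max_right T 1).trans_lt hTt) hc₂]
  have hlocal : (⋃ t ∈ Ici t₀, StLe b c₁ c₂ t) ∩ ball f (c₂ / 4) ⊆
      ⋃ t ∈ Icc t₀ (max T 1), StLe b c₁ c₂ t := by
    rintro g ⟨hg, hgf⟩
    obtain ⟨t, ht, hgt⟩ := mem_iUnion₂.1 hg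
    exact mem_iUnion₂.2 ⟨t, ⟨ht, hbounded g hgf t ht hgt⟩, hgt⟩
  have hf' := isOpen_ball.closure_inter ⟨hf, mem_ball_self (by positivity : 0 < c₂ / 4)⟩
  exact biUnion_mono Icc_subset_Ici_self (fun _ _ => subset_rfl)
    ((isClosed_biUnion_Icc_StLe t₀ (max T 1)).closure_subset_iff.2 hlocal hf')

end Closed

section Dense

def deficit (b c₁ c₂ : ℝ) (F : ℝ → ℝ) (t s : ℝ) : ℝ := F s - F t - (b + c₂ * t - c₁ * s)

variable {b c₁ c₂ : ℝ}

lemma exists_pos_forall_neg_lt_deficit {F : ℝ → ℝ} {t ε : ℝ} (hF : ContinuousAt F t)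
    (hc₁ : 0 ≤ c₁) (hbt : b ≤ (c₁ - c₂) * t) (hε : 0 < ε)
    (h : ∀ s ∈ Ioo 0 t, 0 ≤ deficit b c₁ c₂ F t s) :
    ∃ κ > 0, ∀ s ∈ Ioo 0 (t + κ), -ε < deficit b c₁ c₂ F (t + κ) s := by
  obtain ⟨δ, hδ, hFδ⟩ := Metric.continuousAt_iff.1 hF (ε / 4) (by positivity)
  have hsmall : ∀ᶠ κ in 𝓝 (0 : ℝ), κ < δ ∧ c₂ * κ < ε / 2 :=
    (eventually_lt_nhds hδ).and <| (continuous_const_mul c₂).continuousAt.eventually_lt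
      continuousAt_const (by simpa using half_pos hε)
  obtain ⟨κ, ⟨hκδ, hκc⟩, hκ⟩ := ((hsmall.filter_mono nhdsWithin_le_nhds).and
    (self_mem_nhdsWithin : ∀ᶠ κ in 𝓝[>] (0 : ℝ), 0 < κ)).exists
  have hosc : ∀ u ∈ Icc t (t + κ), |F u - F t| < ε / 4 := fun u hu => by
    refine hFδ ?_
    rw [Real.dist_eq, abs_lt]
    constructor <;> linarith [hu.1, hu.2]
  have hend := abs_lt.1 (hosc (t + κ) ⟨by linarith, le_rfl⟩)
  refine ⟨κ, hκ, fun s hs => ?_⟩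
  unfold deficit at h ⊢
  rcases lt_or_ge s t with hst | hts
  · linarith [h s ⟨hs.1, hst⟩]
  · have hmid := abs_lt.1 (hosc s ⟨hts, hs.2.le⟩)
    nlinarith [mul_le_mul_of_nonneg_left hts hc₁]

lemma exists_ramp_add_pos {D : ℝ → ℝ} {t η : ℝ} (hD : ContinuousAt D t) (ht : 0 < t) (hDt : 0 < D t)
    (hη : 0 ≤ η) (hlow : ∀ s ∈ Ioo 0 t, -η < D s) :
    ∃ ψ : ℝ → ℝ, Continuous ψ ∧ (∀ x, ψ x ∈ Icc 0 1) ∧ ψ 0 = 0 ∧ ψ t = 1 ∧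
      ∀ s ∈ Ioo 0 t, 0 < D s + η * (1 - ψ s) := by
  obtain ⟨a, hat, ha⟩ := exists_Ioc_subset_of_mem_nhds (hD.eventually (lt_mem_nhds hDt)) ⟨0, ht⟩
  set a' := max a 0
  have hta : 0 < t - a' := sub_pos.2 (max_lt hat ht)
  refine ⟨fun s => Real.smoothTransition ((s - a') / (t - a')), by fun_prop,
    fun x => ⟨Real.smoothTransition.nonneg _, Real.smoothTransition.le_one _⟩,
    Real.smoothTransition.zero_of_nonpos
      (div_nonpos_of_nonpos_of_nonneg (by simp [a']) hta.le),
    Real.smoothTransition.one_of_one_le (by rw [div_self hta.ne']), fun s hs => ?_⟩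
  dsimp only
  rcases le_or_gt s a' with hsa | hsa
  · rw [Real.smoothTransition.zero_of_nonpos
      (div_nonpos_of_nonpos_of_nonneg (by linarith) hta.le)]
    linarith [hlow s hs]
  · have hDs : 0 < D s := ha ⟨(le_max_left a 0).trans_lt hsa, hs.2.le⟩
    have := Real.smoothTransition.le_one ((s - a') / (t - a'))
    nlinarith

lemma exists_mem_St_dist_lt {t η : ℝ} (hc₁ : 0 ≤ c₁) (hc : c₂ < c₁) (ht : 0 ≤ t)
    (hbt : b ≤ (c₁ - c₂) * t) {f : OmegaSpace} (hf : f ∈ StLe b c₁ c₂ t) (hη : 0 < η) :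
    ∃ t' > t, ∃ g ∈ St b c₁ c₂ t', dist f g < η := by
  set F := fun s => pathVal f (-s)
  have hF : Continuous F := by fun_prop
  obtain ⟨κ, hκ, hdeficit⟩ := exists_pos_forall_neg_lt_deficit hF.continuousAt hc₁ hbt
    (half_pos hη) fun s hs => sub_nonneg.2 (hf s hs)
  set t' := t + κ
  have hDt' : 0 < deficit b c₁ c₂ F t' t' := by
    rw [deficit]
    nlinarith [mul_pos (sub_pos.2 hc) hκ]
  obtain ⟨ψ, hψ, hψ01, hψ0, hψt', hpos⟩ := exists_ramp_add_pos
    (by unfold deficit; fun_prop : Continuous (deficit b c₁ c₂ F t')).continuousAt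
    (by positivity) hDt' (half_pos hη).le hdeficit
  obtain ⟨g, hfg, hg⟩ := exists_pathVal_eq_add f (φ := fun x => -(η / 2) * ψ (-x)) (by fun_prop)
    (by simp [hψ0]) (M := η / 2) fun x => by
      rw [abs_mul, abs_neg, abs_of_pos (half_pos hη), abs_of_nonneg (hψ01 _).1]
      nlinarith [(hψ01 (-x)).2]
  refine ⟨t', by linarith, g, fun s hs => ?_, hfg.trans_lt (half_lt_self hη)⟩
  have := hpos s hs
  simp only [deficit, F] at this
  simp only [hg, neg_neg, hψt']
  linarith

end Dense

/-- Equation (33) of the paper: the closure of S = ⋃_{t > t₀} S^t in (Ω, ‖·‖_Ω) is the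
union over t ≥ t₀ of the closures of the S^t (t₀ = b/(c₁ − c₂)). -/
theorem closure_S (b c₁ c₂ : ℝ) (hb : 0 < b) (hc₂ : 0 < c₂) (hc : c₂ < c₁) :
    closure (⋃ t ∈ Ioi (b / (c₁ - c₂)), St b c₁ c₂ t) =
      ⋃ t ∈ Ici (b / (c₁ - c₂)),
        {f : OmegaSpace | ∀ s ∈ Ioo (0 : ℝ) t,
          pathVal f (-s) - pathVal f (-t) ≥ b + c₂ * t - c₁ * s} := by
  have ht₀ : 0 < b / (c₁ - c₂) := div_pos hb (sub_pos.2 hc)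
  apply Subset.antisymm
  · exact closure_minimal (biUnion_mono Ioi_subset_Ici_self fun t _ => St_subset_StLe t)
      (isClosed_biUnion_Ici_StLe hb.le hc₂ ht₀)
  · refine iUnion₂_subset fun t ht f hf => Metric.mem_closure_iff.2 fun η hη => ?_
    have hbt : b ≤ (c₁ - c₂) * t := by rwa [mem_Ici, div_le_iff₀' (sub_pos.2 hc)] at ht
    obtain ⟨t', htt', g, hg, hfg⟩ :=
      exists_mem_St_dist_lt (hc₂.trans hc).le hc (ht₀.trans_le ht).le hbt hf hη
    exact ⟨g, mem_iUnion₂.2 ⟨t', ht.trans_lt htt', hg⟩, hfg⟩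
end

section
/- Let f : [0,∞) → ℝ be continuous with f(0) = 0 and f(t)/t → 0 as t → ∞. Then sup_{t ≥ 0}(f(t) − c₂t) − sup_{s ≥ 0}(f(s) − c₁s) > b if and only if there exists t ≥ 0 such that f(t) − f(s) > b + c₂t − c₁s for all s ∈ [0,t]; moreover, any such t necessarily satisfies t > t₀ = b/(c₁−c₂). (This is the deterministic content of the representation of the second queue of the tandem system: the second-queue content exceeds b exactly when the cumulative input path admits such an epoch t, where f(t) plays the role of the amount of input over the last t time units.) -/
/-!
Since `f t / t → 0`, each net-input path `f t - c t` (`c > 0`) tends to `-∞` and so attains its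
supremum over `[0, ∞)`; let `t₂` and `s₁` be maximisers for `c₂` and `c₁`. If the difference of
the suprema exceeds `b`, then `t₂` is an epoch. Conversely, given an epoch `t`, either `s₁ ≤ t`,
and the epoch inequality at `s = s₁` bounds the difference below, or `s₁ > t`, and already at
`s₁` the two paths differ by `(c₁ - c₂) s₁ > (c₁ - c₂) t > b`, the last inequality being the
epoch inequality at `s = t`, which also gives `t > b / (c₁ - c₂)`.
-/

open Set Filter Topology

theorem IsMaxOn.csSup_image_eq {α β : Type*} [ConditionallyCompleteLinearOrder α] {f : β → α}
    {s : Set β} {x₀ : β} (hx₀ : x₀ ∈ s) (h : IsMaxOn f s x₀) : sSup (f '' s) = f x₀ := by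
  rw [image_eq_range]
  exact h.iSup_eq hx₀

theorem ContinuousOn.exists_isMaxOn_Ici_of_tendsto_atBot {α : Type*} [LinearOrder α]
    [TopologicalSpace α] [ClosedIciTopology α] {g : ℝ → α} {a : ℝ} (hg : ContinuousOn g (Ici a))
    (hbot : Tendsto g atTop atBot) : ∃ t ∈ Ici a, IsMaxOn g (Ici a) t := by
  refine hg.exists_isMaxOn' isClosed_Ici self_mem_Ici ?_
  rw [cocompact_eq_atBot_atTop, inf_sup_right, (disjoint_atBot_principal_Ici a).eq_bot,
    bot_sup_eq]
  exact (tendsto_atBot.1 hbot (g a)).filter_mono inf_le_left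

theorem tendsto_sub_mul_atBot_of_tendsto_div_zero {f : ℝ → ℝ} {c : ℝ} (hc : 0 < c)
    (hlim : Tendsto (fun t => f t / t) atTop (𝓝 0)) :
    Tendsto (fun t => f t - c * t) atTop atBot := by
  have hprod : Tendsto (fun t => t * (f t / t - c)) atTop atBot :=
    tendsto_id.atTop_mul_neg (by linarith : (0 : ℝ) - c < 0) (hlim.sub_const c)
  refine hprod.congr' ?_
  filter_upwards [eventually_gt_atTop 0] with t ht
  field_simp

theorem exists_isMaxOn_sub_mul {f : ℝ → ℝ} {c : ℝ} (hc : 0 < c) (hf : ContinuousOn f (Ici 0))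
    (hlim : Tendsto (fun t => f t / t) atTop (𝓝 0)) :
    ∃ t ∈ Ici 0, IsMaxOn (fun t => f t - c * t) (Ici 0) t :=
  (hf.sub (continuousOn_const.mul continuousOn_id)).exists_isMaxOn_Ici_of_tendsto_atBot
    (tendsto_sub_mul_atBot_of_tendsto_div_zero hc hlim)

def IsOverflowEpoch (f : ℝ → ℝ) (b c₁ c₂ t : ℝ) : Prop :=
  ∀ s ∈ Icc (0 : ℝ) t, f t - f s > b + c₂ * t - c₁ * s

namespace IsOverflowEpoch

variable {f : ℝ → ℝ} {b c₁ c₂ t : ℝ}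

theorem lt_mul (ht : 0 ≤ t) (h : IsOverflowEpoch f b c₁ c₂ t) : b < (c₁ - c₂) * t := by
  have := h t ⟨ht, le_rfl⟩
  linarith

theorem of_lt_sub {s₁ : ℝ} (hmax₁ : IsMaxOn (fun s => f s - c₁ * s) (Ici 0) s₁)
    (hlt : b < (f t - c₂ * t) - (f s₁ - c₁ * s₁)) : IsOverflowEpoch f b c₁ c₂ t := by
  intro s hs
  have : f s - c₁ * s ≤ f s₁ - c₁ * s₁ := hmax₁ (mem_Ici.2 hs.1)
  linarith

theorem lt_sub {t₂ s₁ : ℝ} (hc : c₂ ≤ c₁) (ht : 0 ≤ t) (h : IsOverflowEpoch f b c₁ c₂ t)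
    (hmax₂ : IsMaxOn (fun t => f t - c₂ * t) (Ici 0) t₂) (hs₁ : 0 ≤ s₁) :
    b < (f t₂ - c₂ * t₂) - (f s₁ - c₁ * s₁) := by
  rcases le_or_gt s₁ t with hs₁t | hts₁
  · have hgap := h s₁ ⟨hs₁, hs₁t⟩
    have : f t - c₂ * t ≤ f t₂ - c₂ * t₂ := hmax₂ (mem_Ici.2 ht)
    linarith
  · have hgap := h.lt_mul ht
    have hmono : (c₁ - c₂) * t ≤ (c₁ - c₂) * s₁ :=
      mul_le_mul_of_nonneg_left hts₁.le (sub_nonneg.2 hc)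
    have : f s₁ - c₂ * s₁ ≤ f t₂ - c₂ * t₂ := hmax₂ (mem_Ici.2 hs₁)
    linarith

end IsOverflowEpoch

theorem tandem_representation_general (b c₁ c₂ : ℝ) (hc₂ : 0 < c₂) (hc : c₂ < c₁)
    (f : ℝ → ℝ) (hf : ContinuousOn f (Ici 0))
    (hlim : Tendsto (fun t => f t / t) atTop (nhds 0)) :
    (sSup ((fun t => f t - c₂ * t) '' Ici 0) - sSup ((fun s => f s - c₁ * s) '' Ici 0) > b
      ↔ ∃ t ≥ (0 : ℝ), ∀ s ∈ Icc (0 : ℝ) t, f t - f s > b + c₂ * t - c₁ * s)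
    ∧ ∀ t ≥ (0 : ℝ), (∀ s ∈ Icc (0 : ℝ) t, f t - f s > b + c₂ * t - c₁ * s) →
        t > b / (c₁ - c₂) := by
  obtain ⟨t₂, ht₂, hmax₂⟩ := exists_isMaxOn_sub_mul hc₂ hf hlim
  obtain ⟨s₁, hs₁, hmax₁⟩ := exists_isMaxOn_sub_mul (hc₂.trans hc) hf hlim
  rw [hmax₂.csSup_image_eq ht₂, hmax₁.csSup_image_eq hs₁]
  refine ⟨⟨fun hlt => ⟨t₂, ht₂, IsOverflowEpoch.of_lt_sub hmax₁ hlt⟩, ?_⟩, ?_⟩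
  · rintro ⟨t, ht, h⟩
    exact IsOverflowEpoch.lt_sub hc.le ht h hmax₂ hs₁
  · intro t ht h
    rw [gt_iff_lt, div_lt_iff₀' (sub_pos.2 hc)]
    exact IsOverflowEpoch.lt_mul ht h

/-- Deterministic content of Lemma 2.4 (representation (10)): for a continuous input path
f on [0,∞) with f 0 = 0 and f(t)/t → 0, the second-queue content
sup_{t≥0}(f(t) − c₂t) − sup_{s≥0}(f(s) − c₁s) exceeds b iff there is an epoch t ≥ 0 with
f(t) − f(s) > b + c₂t − c₁s for all s ∈ [0,t]; moreover any such t satisfies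
t > t₀ = b/(c₁ − c₂). -/
theorem tandem_representation (b c₁ c₂ : ℝ) (hb : 0 < b) (hc₂ : 0 < c₂) (hc : c₂ < c₁)
    (f : ℝ → ℝ) (hf : ContinuousOn f (Ici 0)) (hf0 : f 0 = 0)
    (hlim : Tendsto (fun t => f t / t) atTop (nhds 0)) :
    (sSup ((fun t => f t - c₂ * t) '' Ici 0) - sSup ((fun s => f s - c₁ * s) '' Ici 0) > b
      ↔ ∃ t ≥ (0 : ℝ), ∀ s ∈ Icc (0 : ℝ) t, f t - f s > b + c₂ * t - c₁ * s)
    ∧ ∀ t ≥ (0 : ℝ), (∀ s ∈ Icc (0 : ℝ) t, f t - f s > b + c₂ * t - c₁ * s) →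
        t > b / (c₁ - c₂) :=
  tandem_representation_general b c₁ c₂ hc₂ hc f hf hlim
end

section
/- Suppose Assumption 3.3 holds for the variance function v. Then for every t ≥ t₀ = b/(c₁−c₂) and every s ∈ [0,t], one has (√v(t) − √v(t−s))·(b + c₂t) ≤ √v(t)·c₁s. (Equivalently: inequality (16) of the paper holds for no s ∈ (0,t) when t > t₀.) -/
open Set

/-! Since `√v` is concave on `[0, ∞)` and vanishes at `0`, the chord from the origin lies below its
graph, so `t (√v t - √v (t - s)) ≤ s √v t`; and `t ≥ b / (c₁ - c₂)` says exactly
`b + c₂ t ≤ c₁ t`. Multiplying the two bounds gives the claim. -/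

theorem ConcaveOn.mul_le_mul_of_map_zero_nonneg {𝕜 : Type*} [Field 𝕜] [LinearOrder 𝕜]
    [IsStrictOrderedRing 𝕜] {f : 𝕜 → 𝕜} (hf : ConcaveOn 𝕜 (Ici 0) f) (h0 : 0 ≤ f 0)
    {x t : 𝕜} (hx : 0 ≤ x) (hxt : x ≤ t) : x * f t ≤ t * f x := by
  rcases hx.eq_or_lt with rfl | hx
  · simpa using mul_nonneg (hx.trans hxt) h0
  have ht : 0 < t := hx.trans_le hxt
  have hconv := hf.2 (mem_Ici.mpr ht.le) (mem_Ici.mpr le_rfl) (div_nonneg hx.le ht.le)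
    (sub_nonneg.mpr ((div_le_one ht).mpr hxt)) (add_sub_cancel _ _)
  simp only [smul_eq_mul, mul_zero, add_zero, div_mul_cancel₀ x ht.ne'] at hconv
  calc x * f t ≤ x * f t + (t - x) * f 0 := le_add_of_nonneg_right (mul_nonneg (by linarith) h0)
    _ = t * (x / t * f t + (1 - x / t) * f 0) := by field_simp
    _ ≤ t * f x := mul_le_mul_of_nonneg_left hconv ht.le

theorem eq16_fails_general (b c₁ c₂ : ℝ) (hb : 0 < b) (hc₂ : 0 < c₂) (hc : c₂ < c₁)
    (v : ℝ → ℝ) (hv0 : v 0 = 0)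
    (hconc : StrictConcaveOn ℝ (Ici 0) (fun u => Real.sqrt (v u))) :
    ∀ t, b / (c₁ - c₂) ≤ t → ∀ s ∈ Icc (0 : ℝ) t,
      (Real.sqrt (v t) - Real.sqrt (v (t - s))) * (b + c₂ * t) ≤
        Real.sqrt (v t) * (c₁ * s) := by
  intro t ht s ⟨hs0, hst⟩
  set f : ℝ → ℝ := fun u => Real.sqrt (v u)
  have hcc : 0 < c₁ - c₂ := sub_pos.mpr hc
  have ht0 : 0 < t := (div_pos hb hcc).trans_le ht
  have hB : 0 ≤ b + c₂ * t := by positivity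
  have hBt : b + c₂ * t ≤ c₁ * t := by
    have := (div_le_iff₀ hcc).mp ht
    linarith
  have hstar : t * (f t - f (t - s)) ≤ s * f t := by
    have := hconc.concaveOn.mul_le_mul_of_map_zero_nonneg (by simp [f, hv0])
      (sub_nonneg.mpr hst) (sub_le_self t hs0)
    linarith
  refine le_of_mul_le_mul_left ?_ ht0
  calc t * ((f t - f (t - s)) * (b + c₂ * t)) = t * (f t - f (t - s)) * (b + c₂ * t) := by ring
    _ ≤ s * f t * (b + c₂ * t) := mul_le_mul_of_nonneg_right hstar hB
    _ ≤ s * f t * (c₁ * t) := mul_le_mul_of_nonneg_left hBt (by positivity)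
    _ = t * (f t * (c₁ * s)) := by ring

/-- Under Assumption 3.3 (√v is C² on [0,∞), strictly increasing and strictly concave),
for every t ≥ t₀ = b/(c₁−c₂) and s ∈ [0,t] one has
(√v(t) − √v(t−s))·(b + c₂t) ≤ √v(t)·c₁s, i.e. inequality (16) of the paper fails for all
s ∈ (0,t) when t > t₀. -/
theorem eq16_fails (b c₁ c₂ : ℝ) (hb : 0 < b) (hc₂ : 0 < c₂) (hc : c₂ < c₁)
    (v : ℝ → ℝ) (hv0 : v 0 = 0) (hvpos : ∀ u > 0, 0 < v u)
    (hvcont : ContinuousOn v (Ici 0))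
    (hC2 : ContDiffOn ℝ 2 (fun u => Real.sqrt (v u)) (Ici 0))
    (hmono : StrictMonoOn (fun u => Real.sqrt (v u)) (Ici 0))
    (hconc : StrictConcaveOn ℝ (Ici 0) (fun u => Real.sqrt (v u))) :
    ∀ t, b / (c₁ - c₂) ≤ t → ∀ s ∈ Icc (0 : ℝ) t,
      (Real.sqrt (v t) - Real.sqrt (v (t - s))) * (b + c₂ * t) ≤
        Real.sqrt (v t) * (c₁ * s) :=
  eq16_fails_general b c₁ c₂ hb hc₂ hc v hv0 hconc
end

section
/- Fix t > t₀ = b/(c₁−c₂) and s ∈ (0,t). Assume Assumption 3.3 holds for v and that the 2×2 matrix Σ(t−s,t) with diagonal entries v(t), v(t−s) and off-diagonal entries Γ(t−s,t) is positive definite. Then the infimum of Λ(y,z) = ½(y,z)Σ(t−s,t)^{-1}(y,z)^T over the set {(y,z) ∈ ℝ² : y ≥ b + c₂t, z ≥ b + c₂t − c₁s} equals Υ(s,t), where Υ(s,t) = Λ(b + c₂t, b + c₂t − c₁s) if k(s,t) > c₁s, and Υ(s,t) = (b + c₂t)²/(2v(t)) if k(s,t) ≤ c₁s. -/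
/-!
With `A = v t`, `B = v (t - s)`, `C = Γ(t - s, t)` and `D = A B - C²`, the rate is
`Λ(y, z) = Q(y, z) / (2 D)` for the adjugate form `Q(y, z) = B y² - 2 C y z + A z²`, and
`A Q(y, z) = (A z - C y)² + D y²`. On the quadrant `y ≥ y₀`, `z ≥ z₀` the minimiser is therefore
`(y₀, C y₀ / A)` when that point is admissible, which is exactly `k(s, t) ≤ c₁ s`, with value
`y₀² / (2 A)`. Otherwise `C y₀ < A z₀`, and the corner `(y₀, z₀)` is the minimiser as soon as
also `C z₀ ≤ B y₀`. Strict concavity of `√v` with `√v 0 = 0` makes `√v u / u` decreasing, and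
together with `y₀ < c₁ t` (i.e. `t > t₀`) this gives `√A z₀ ≤ √B y₀`, which yields `C z₀ ≤ B y₀`.
-/

open Set Matrix
noncomputable section

/-- Γ(s,t) = (v(t) − v(t−s) + v(s))/2, the covariance Cov(A(t), A(s)) (for 0 ≤ s ≤ t). -/
def Gam (v : ℝ → ℝ) (s t : ℝ) : ℝ := (v t - v (t - s) + v s) / 2

/-- k(s,t) = Γ(s,t)(b + c₂t)/v(t). -/
def kvf (b c₂ : ℝ) (v : ℝ → ℝ) (s t : ℝ) : ℝ := Gam v s t * (b + c₂ * t) / v t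

/-- The covariance matrix Σ(t−s, t): diagonal entries v(t), v(t−s), off-diagonal entries
Γ(t−s,t) = (v(t) − v(s) + v(t−s))/2. -/
def SigTS (v : ℝ → ℝ) (s t : ℝ) : Matrix (Fin 2) (Fin 2) ℝ :=
  !![v t, (v t - v s + v (t - s)) / 2; (v t - v s + v (t - s)) / 2, v (t - s)]

/-- Λ(y,z) = ½ (y,z) Σ(t−s,t)⁻¹ (y,z)ᵀ. -/
def Lam (v : ℝ → ℝ) (s t y z : ℝ) : ℝ :=
  (1 / 2) * (![y, z] ⬝ᵥ ((SigTS v s t)⁻¹ *ᵥ ![y, z]))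

def gaussRate (A B C y z : ℝ) : ℝ :=
  (1 / 2) * (![y, z] ⬝ᵥ ((!![A, C; C, B])⁻¹ *ᵥ ![y, z]))

theorem gaussRate_eq (A B C y z : ℝ) :
    gaussRate A B C y z = (B * y ^ 2 - 2 * C * y * z + A * z ^ 2) / (2 * (A * B - C ^ 2)) := by
  have hdet : (!![A, C; C, B]).det = A * B - C ^ 2 := by
    rw [Matrix.det_fin_two_of]; ring
  rw [gaussRate, Matrix.inv_def, Matrix.adjugate_fin_two_of, Ring.inverse_eq_inv, hdet]
  simp only [one_div, smul_of, smul_cons, smul_eq_mul, mul_neg, Matrix.smul_empty, mulVec_cons,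
    mulVec_empty, add_zero, dotProduct_add, dotProduct_smul, cons_dotProduct, vecHead,
    Function.comp_apply, cons_val_zero, cons_val_fin_one, vecTail, Fin.succ_zero_eq_one,
    cons_val_one, dotProduct_of_isEmpty]
  rw [mul_comm 2, ← div_div]
  ring

section QuadrantMinimum

variable {A B C y₀ z₀ : ℝ}

theorem isLeast_gaussRate_corner (hA : 0 < A) (hdet : C ^ 2 < A * B)
    (hy : C * z₀ ≤ B * y₀) (hz : C * y₀ ≤ A * z₀) :
    IsLeast ((fun p : ℝ × ℝ => gaussRate A B C p.1 p.2) '' Ici (y₀, z₀))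
      (gaussRate A B C y₀ z₀) := by
  refine ⟨⟨(y₀, z₀), self_mem_Ici, rfl⟩, ?_⟩
  rintro _ ⟨⟨y, z⟩, ⟨hy₀y, hz₀z⟩, rfl⟩
  dsimp only
  rw [gaussRate_eq, gaussRate_eq, div_le_div_iff_of_pos_right (by nlinarith)]
  -- expand around the corner: both first-order terms are ≥ 0 and the second-order one is a PD form
  nlinarith [mul_nonneg (sub_nonneg.2 hy₀y) (sub_nonneg.2 hy),
    mul_nonneg (sub_nonneg.2 hz₀z) (sub_nonneg.2 hz),
    sq_nonneg (A * (z - z₀) - C * (y - y₀)),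
    mul_nonneg (sub_nonneg.2 hdet.le) (sq_nonneg (y - y₀))]

theorem isLeast_gaussRate_edge (hA : 0 < A) (hdet : C ^ 2 < A * B) (hy₀ : 0 ≤ y₀)
    (hz : A * z₀ ≤ C * y₀) :
    IsLeast ((fun p : ℝ × ℝ => gaussRate A B C p.1 p.2) '' Ici (y₀, z₀))
      (y₀ ^ 2 / (2 * A)) := by
  have hD : 0 < A * B - C ^ 2 := by linarith
  refine ⟨⟨(y₀, C * y₀ / A), ⟨le_rfl, (le_div_iff₀' hA).2 hz⟩, ?_⟩, ?_⟩
  · dsimp only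
    rw [gaussRate_eq, div_eq_div_iff (by positivity) (by positivity)]
    field_simp
    ring
  · rintro _ ⟨⟨y, z⟩, ⟨hy₀y, -⟩, rfl⟩
    dsimp only
    rw [gaussRate_eq, div_le_div_iff₀ (by positivity) (by positivity)]
    nlinarith [sq_nonneg (A * z - C * y),
      mul_nonneg hD.le (sub_nonneg.2 (mul_self_le_mul_self hy₀ hy₀y))]

end QuadrantMinimum

theorem mul_le_mul_of_sqrt_mul_le_sqrt_mul {A B C y₀ z₀ : ℝ} (hA : 0 < A) (hB : 0 ≤ B)
    (hdet : C ^ 2 < A * B) (hy₀ : 0 < y₀) (hroot : √A * z₀ ≤ √B * y₀)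
    (hz : C * y₀ ≤ A * z₀) : C * z₀ ≤ B * y₀ := by
  rcases le_or_gt C 0 with hC | hC
  · nlinarith [mul_le_mul_of_nonpos_left hz hC]
  rcases le_or_gt z₀ 0 with hz₀ | hz₀
  · nlinarith [mul_pos hC hy₀, mul_pos hA hy₀]
  have hsq : A * z₀ ^ 2 ≤ B * y₀ ^ 2 := by
    rw [← Real.sq_sqrt hA.le, ← Real.sq_sqrt hB, ← mul_pow, ← mul_pow]
    exact pow_le_pow_left₀ (by positivity) hroot 2
  nlinarith [mul_le_mul_of_nonneg_right hz hz₀.le]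

theorem StrictConcaveOn.div_lt_div_of_map_zero {f : ℝ → ℝ} (hf : StrictConcaveOn ℝ (Ici 0) f)
    (h0 : f 0 = 0) {x t : ℝ} (hx : 0 < x) (hxt : x < t) : f t / t < f x / x := by
  simpa [h0] using hf.secant_strict_mono self_mem_Ici (mem_Ici.2 hx.le)
    (mem_Ici.2 (hx.trans hxt).le) hx.ne' (hx.trans hxt).ne' hxt

-- `v t - Γ(s, t) = Γ(t - s, t)`
theorem lt_kvf_iff {b c₁ c₂ s t : ℝ} {v : ℝ → ℝ} (hv : 0 < v t) :
    c₁ * s < kvf b c₂ v s t ↔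
      (v t - v s + v (t - s)) / 2 * (b + c₂ * t) < v t * (b + c₂ * t - c₁ * s) := by
  rw [kvf, Gam, lt_div_iff₀ hv]
  constructor <;> intro h <;> linarith

theorem lemma_3_4_general (b c₁ c₂ : ℝ) (hb : 0 < b) (hc₂ : 0 < c₂) (hc : c₂ < c₁)
    (v : ℝ → ℝ) (hv0 : v 0 = 0)
    (hconc : StrictConcaveOn ℝ (Ici 0) (fun u => Real.sqrt (v u)))
    (s t : ℝ) (ht : b / (c₁ - c₂) < t) (hs : s ∈ Ioo (0 : ℝ) t)
    (hPD : (SigTS v s t).PosDef) :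
    sInf ((fun p : ℝ × ℝ => Lam v s t p.1 p.2) ''
        {p : ℝ × ℝ | b + c₂ * t ≤ p.1 ∧ b + c₂ * t - c₁ * s ≤ p.2}) =
      if c₁ * s < kvf b c₂ v s t then Lam v s t (b + c₂ * t) (b + c₂ * t - c₁ * s)
      else (b + c₂ * t) ^ 2 / (2 * v t) := by
  obtain ⟨hs0, hst⟩ := hs
  have ht0 : 0 < t := hs0.trans hst
  have hdet : ((v t - v s + v (t - s)) / 2) ^ 2 < v t * v (t - s) := by
    have := hPD.det_pos
    rw [SigTS, Matrix.det_fin_two_of] at this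
    linarith
  set C := (v t - v s + v (t - s)) / 2
  set y₀ := b + c₂ * t
  have hA : 0 < v t := hPD.diag_pos (i := 0)
  have hB : 0 < v (t - s) := hPD.diag_pos (i := 1)
  have hy₀ : 0 < y₀ := by positivity
  have hy₀t : y₀ < c₁ * t := by
    have := (div_lt_iff₀ (sub_pos.2 hc)).1 ht
    linarith
  change sInf ((fun p : ℝ × ℝ => gaussRate (v t) (v (t - s)) C p.1 p.2) '' Ici (y₀, y₀ - c₁ * s))
    = if c₁ * s < kvf b c₂ v s t then gaussRate (v t) (v (t - s)) C y₀ (y₀ - c₁ * s)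
      else y₀ ^ 2 / (2 * v t)
  split_ifs with hk
  · rw [lt_kvf_iff hA] at hk
    have hroot : √(v t) * (y₀ - c₁ * s) ≤ √(v (t - s)) * y₀ := by
      have hslope := hconc.div_lt_div_of_map_zero (by simp [hv0]) (sub_pos.2 hst)
        (sub_lt_self t hs0)
      rw [div_lt_div_iff₀ ht0 (sub_pos.2 hst)] at hslope
      nlinarith [mul_lt_mul_of_pos_left hslope hy₀, ht0,
        mul_nonneg (mul_nonneg (Real.sqrt_nonneg (v t)) hs0.le) (sub_pos.2 hy₀t).le]
    have hcorner := mul_le_mul_of_sqrt_mul_le_sqrt_mul hA hB.le hdet hy₀ hroot hk.le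
    exact (isLeast_gaussRate_corner hA hdet hcorner hk.le).csInf_eq
  · rw [lt_kvf_iff hA, not_lt] at hk
    exact (isLeast_gaussRate_edge hA hdet hy₀.le hk).csInf_eq

/-- Lemma 3.4: under Assumption 3.3, for t > t₀ and s ∈ (0,t), the infimum of Λ over
{y ≥ b + c₂t, z ≥ b + c₂t − c₁s} equals Υ(s,t), which is Λ(b+c₂t, b+c₂t−c₁s) if
k(s,t) > c₁s and (b+c₂t)²/(2v(t)) if k(s,t) ≤ c₁s. -/
theorem lemma_3_4 (b c₁ c₂ : ℝ) (hb : 0 < b) (hc₂ : 0 < c₂) (hc : c₂ < c₁)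
    (v : ℝ → ℝ) (hv0 : v 0 = 0) (hvpos : ∀ u > 0, 0 < v u)
    (hvcont : ContinuousOn v (Ici 0))
    (hC2 : ContDiffOn ℝ 2 (fun u => Real.sqrt (v u)) (Ici 0))
    (hmono : StrictMonoOn (fun u => Real.sqrt (v u)) (Ici 0))
    (hconc : StrictConcaveOn ℝ (Ici 0) (fun u => Real.sqrt (v u)))
    (s t : ℝ) (ht : b / (c₁ - c₂) < t) (hs : s ∈ Ioo (0 : ℝ) t)
    (hPD : (SigTS v s t).PosDef) :
    sInf ((fun p : ℝ × ℝ => Lam v s t p.1 p.2) ''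
        {p : ℝ × ℝ | b + c₂ * t ≤ p.1 ∧ b + c₂ * t - c₁ * s ≤ p.2}) =
      if c₁ * s < kvf b c₂ v s t then Lam v s t (b + c₂ * t) (b + c₂ * t - c₁ * s)
      else (b + c₂ * t) ^ 2 / (2 * v t) :=
  lemma_3_4_general b c₁ c₂ hb hc₂ hc v hv0 hconc s t ht hs hPD

end
end

section
/- Fix 0 < s < t with t > t₀ = b/(c₁−c₂). Assume the 2×2 matrices Σ(t−s,t) (diagonal v(t), v(t−s); off-diagonal Γ(t−s,t)) and Σ(s,t) (diagonal v(t), v(s); off-diagonal Γ(s,t)) are both positive definite. Then Υ(s,t) = (b + c₂t)²/(2v(t)) + (max{k(s,t) − c₁s, 0})² / (2(v(s) − Γ(s,t)²/v(t))). In particular, when k(s,t) > c₁s this expresses Λ(b + c₂t, b + c₂t − c₁s) as the sum of the single-queue cost (b+c₂t)²/(2v(t)) and the term (k(s,t) − c₁s)²/(2(v(s) − Γ(s,t)²/v(t))). -/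
open Set Matrix
noncomputable section

/-- The covariance matrix Σ(s, t): diagonal entries v(t), v(s), off-diagonal Γ(s,t). -/
def SigM (v : ℝ → ℝ) (s t : ℝ) : Matrix (Fin 2) (Fin 2) ℝ :=
  !![v t, Gam v s t; Gam v s t, v s]

/-! With `G = Γ(s,t)`, the off-diagonal entry of `Σ(t−s,t)` is `v t − G` and
`v (t−s) = v t + v s − 2G`. Completing the square in the quadratic form of `Σ(t−s,t)⁻¹` splits
`Λ(y, z)` into `y² / (2 v t)` plus a square over the Schur complement
`v (t−s) − (v t − G)² / v t`, which equals `v s − G² / v t`, the Schur complement of `Σ(s,t)`.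
For `y = b + c₂t`, `z = y − c₁s` the completed square is `z − (v t − G) y / v t = k(s,t) − c₁s`. -/

theorem Matrix.dotProduct_inv_fin_two_mulVec {K : Type*} [Field K] {a c d : K} (ha : a ≠ 0)
    (hdet : a * d - c ^ 2 ≠ 0) (y z : K) :
    ![y, z] ⬝ᵥ (!![a, c; c, d]⁻¹ *ᵥ ![y, z]) =
      y ^ 2 / a + (z - c / a * y) ^ 2 / (d - c ^ 2 / a) := by
  rw [inv_def, det_fin_two_of, adjugate_fin_two_of, Ring.inverse_eq_inv', ← sq,
    show d - c ^ 2 / a = (a * d - c ^ 2) / a by field_simp]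
  simp only [dotProduct, mulVec, smul_apply, of_apply, cons_val', cons_val_fin_one, smul_eq_mul,
    Fin.sum_univ_two, Fin.isValue, cons_val_zero, cons_val_one, mul_neg, neg_mul]
  field_simp
  ring

theorem SigTS_eq (v : ℝ → ℝ) (s t : ℝ) :
    SigTS v s t = !![v t, v t - Gam v s t; v t - Gam v s t, v (t - s)] := by
  rw [SigTS, show (v t - v s + v (t - s)) / 2 = v t - Gam v s t by rw [Gam]; ring]

theorem schur_SigTS_eq_schur_SigM {v : ℝ → ℝ} {t : ℝ} (hvt : v t ≠ 0) (s : ℝ) :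
    v (t - s) - (v t - Gam v s t) ^ 2 / v t = v s - Gam v s t ^ 2 / v t := by
  rw [Gam]
  field_simp
  ring

theorem Lam_eq_add_schur {v : ℝ → ℝ} {s t : ℝ} (hvt : v t ≠ 0) (hdet : (SigTS v s t).det ≠ 0)
    (y z : ℝ) :
    Lam v s t y z = y ^ 2 / (2 * v t) +
      (z - (v t - Gam v s t) / v t * y) ^ 2 / (2 * (v s - Gam v s t ^ 2 / v t)) := by
  rw [SigTS_eq, det_fin_two_of, ← sq] at hdet
  rw [Lam, SigTS_eq, dotProduct_inv_fin_two_mulVec hvt hdet, schur_SigTS_eq_schur_SigM hvt,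
    div_mul_eq_div_div_swap, div_mul_eq_div_div_swap]
  ring

theorem cor_3_6_general (b c₁ c₂ : ℝ) (v : ℝ → ℝ) (s t : ℝ) (hPD1 : (SigTS v s t).PosDef) :
    (if c₁ * s < kvf b c₂ v s t then Lam v s t (b + c₂ * t) (b + c₂ * t - c₁ * s)
      else (b + c₂ * t) ^ 2 / (2 * v t)) =
      (b + c₂ * t) ^ 2 / (2 * v t) +
        (max (kvf b c₂ v s t - c₁ * s) 0) ^ 2 / (2 * (v s - (Gam v s t) ^ 2 / v t)) := by
  split_ifs with hk
  · have hvt : v t ≠ 0 := by simpa [SigTS] using (hPD1.diag_pos (i := 0)).ne'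
    rw [Lam_eq_add_schur hvt hPD1.det_pos.ne', max_eq_left (sub_nonneg.2 hk.le)]
    congr 3
    rw [kvf]
    field_simp
    ring
  · rw [max_eq_right (sub_nonpos.2 (not_lt.1 hk))]
    simp

/-- Corollary 3.6 (decomposition):
Υ(s,t) = (b+c₂t)²/(2v(t)) + (max{k(s,t) − c₁s, 0})² / (2(v(s) − Γ(s,t)²/v(t))). -/
theorem cor_3_6 (b c₁ c₂ : ℝ) (hb : 0 < b) (hc₂ : 0 < c₂) (hc : c₂ < c₁)
    (v : ℝ → ℝ) (hv0 : v 0 = 0) (hvpos : ∀ u > 0, 0 < v u)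
    (hvcont : ContinuousOn v (Ici 0))
    (s t : ℝ) (hs : 0 < s) (hst : s < t) (ht : b / (c₁ - c₂) < t)
    (hPD1 : (SigTS v s t).PosDef) (hPD2 : (SigM v s t).PosDef) :
    (if c₁ * s < kvf b c₂ v s t then Lam v s t (b + c₂ * t) (b + c₂ * t - c₁ * s)
      else (b + c₂ * t) ^ 2 / (2 * v t)) =
      (b + c₂ * t) ^ 2 / (2 * v t) +
        (max (kvf b c₂ v s t - c₁ * s) 0) ^ 2 / (2 * (v s - (Gam v s t) ^ 2 / v t)) :=
  cor_3_6_general b c₁ c₂ v s t hPD1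

end
end

section
/- For b, c > 0 and H ∈ (0,1), the function t ↦ (b + ct)²/(2t^{2H}) on (0,∞) attains its minimum uniquely at t = (b/c)·H/(1−H), and the minimum value equals ½·(b/(1−H))^{2−2H}·(c/H)^{2H}. -/
/-!
Substituting t = T s with T = (b/c)·H/(1−H) turns the cost into M · (1 − H + H s)² / s^{2H},
where M is the claimed minimum. By the weighted AM–GM inequality s^H ≤ (1 − H)·1 + H·s, with
equality only at s = 1, the second factor is at least 1 and equals 1 exactly when t = T.
-/

open Set

lemma rpow_le_one_sub_add_mul {s H : ℝ} (hs : 0 ≤ s) (hH₀ : 0 ≤ H) (hH₁ : H ≤ 1) :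
    s ^ H ≤ 1 - H + H * s := by
  simpa using Real.geom_mean_le_arith_mean2_weighted (sub_nonneg.2 hH₁) hH₀ zero_le_one hs
    (sub_add_cancel 1 H)

lemma rpow_lt_one_sub_add_mul {s H : ℝ} (hs : 0 ≤ s) (hs₁ : s ≠ 1) (hH₀ : 0 < H) (hH₁ : H < 1) :
    s ^ H < 1 - H + H * s := by
  simpa using (Real.geom_mean_lt_arith_mean2_weighted_iff_of_pos (sub_pos.2 hH₁) hH₀ zero_le_one
    hs (sub_add_cancel 1 H)).2 (Ne.symm hs₁)

lemma rpow_two_mul_eq_sq {s : ℝ} (hs : 0 ≤ s) (H : ℝ) : s ^ (2 * H) = (s ^ H) ^ 2 := by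
  rw [mul_comm, Real.rpow_mul hs, Real.rpow_two]

lemma one_le_div_rpow_two_mul {s H : ℝ} (hs : 0 < s) (hH₀ : 0 ≤ H) (hH₁ : H ≤ 1) :
    1 ≤ (1 - H + H * s) ^ 2 / s ^ (2 * H) := by
  rw [one_le_div (by positivity), rpow_two_mul_eq_sq hs.le]
  exact pow_le_pow_left₀ (by positivity) (rpow_le_one_sub_add_mul hs.le hH₀ hH₁) 2

lemma div_rpow_two_mul_eq_one_iff {s H : ℝ} (hs : 0 < s) (hH₀ : 0 < H) (hH₁ : H < 1) :
    (1 - H + H * s) ^ 2 / s ^ (2 * H) = 1 ↔ s = 1 := by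
  refine ⟨fun h => ?_, fun h => by simp [h]⟩
  by_contra hs₁
  rw [div_eq_one_iff_eq (by positivity), rpow_two_mul_eq_sq hs.le] at h
  exact (pow_lt_pow_left₀ (rpow_lt_one_sub_add_mul hs.le hs₁ hH₀ hH₁) (by positivity)
    two_ne_zero).ne' h

lemma fifo_cost_eq_mul {b c H t : ℝ} (hb : 0 < b) (hc : 0 < c) (hH₀ : 0 < H) (hH₁ : H < 1)
    (ht : 0 < t) :
    (b + c * t) ^ 2 / (2 * t ^ (2 * H)) =
      (1 / 2) * (b / (1 - H)) ^ (2 - 2 * H) * (c / H) ^ (2 * H) *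
        ((1 - H + H * (t / (b / c * (H / (1 - H))))) ^ 2 /
          (t / (b / c * (H / (1 - H)))) ^ (2 * H)) := by
  have h1H : 0 < 1 - H := sub_pos.2 hH₁
  set T := b / c * (H / (1 - H)) with hT
  have hTpos : 0 < T := by positivity
  have hlin : b + c * t = b / (1 - H) * (1 - H + H * (t / T)) := by
    rw [hT]; field_simp
  have hscale : b / (1 - H) = c / H * T := by
    rw [hT]; field_simp
  have hsq : (b / (1 - H)) ^ 2 = (b / (1 - H)) ^ (2 - 2 * H) * (b / (1 - H)) ^ (2 * H) := by
    rw [← Real.rpow_add (by positivity), sub_add_cancel, Real.rpow_two]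
  have hsplit : t ^ (2 * H) = T ^ (2 * H) * (t / T) ^ (2 * H) := by
    rw [← Real.mul_rpow hTpos.le (by positivity), mul_div_cancel₀ t hTpos.ne']
  rw [hlin, mul_pow, hsq, hsplit]
  nth_rewrite 2 [hscale]
  rw [Real.mul_rpow (by positivity) hTpos.le]
  have : 0 < T ^ (2 * H) := by positivity
  have : 0 < (t / T) ^ (2 * H) := by positivity
  field_simp

/-- For fractional Brownian motion input (v(t) = t^{2H}), the single-FIFO-queue cost
t ↦ (b + ct)²/(2t^{2H}) on (0,∞) attains its minimum uniquely at t = (b/c)·H/(1−H),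
with minimum value ½(b/(1−H))^{2−2H}(c/H)^{2H}. -/
theorem fbm_fifo_min (b c H : ℝ) (hb : 0 < b) (hc : 0 < c) (hH : H ∈ Ioo (0 : ℝ) 1) :
    (∀ t ∈ Ioi (0 : ℝ),
        (1 / 2) * (b / (1 - H)) ^ (2 - 2 * H) * (c / H) ^ (2 * H) ≤
          (b + c * t) ^ 2 / (2 * t ^ (2 * H)))
    ∧ (b + c * (b / c * (H / (1 - H)))) ^ 2 / (2 * (b / c * (H / (1 - H))) ^ (2 * H)) =
        (1 / 2) * (b / (1 - H)) ^ (2 - 2 * H) * (c / H) ^ (2 * H)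
    ∧ ∀ t ∈ Ioi (0 : ℝ),
        (b + c * t) ^ 2 / (2 * t ^ (2 * H)) =
            (1 / 2) * (b / (1 - H)) ^ (2 - 2 * H) * (c / H) ^ (2 * H) →
          t = b / c * (H / (1 - H)) := by
  obtain ⟨hH₀, hH₁⟩ := hH
  have h1H : 0 < 1 - H := sub_pos.2 hH₁
  set T := b / c * (H / (1 - H))
  have hT : 0 < T := by positivity
  set M := (1 / 2) * (b / (1 - H)) ^ (2 - 2 * H) * (c / H) ^ (2 * H)
  have hM : 0 < M := by positivity
  refine ⟨fun t ht => ?_, ?_, fun t ht hmin => ?_⟩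
  · rw [fifo_cost_eq_mul hb hc hH₀ hH₁ ht]
    exact le_mul_of_one_le_right hM.le
      (one_le_div_rpow_two_mul (div_pos ht hT) hH₀.le hH₁.le)
  · rw [fifo_cost_eq_mul hb hc hH₀ hH₁ hT, div_self hT.ne',
      (div_rpow_two_mul_eq_one_iff one_pos hH₀ hH₁).2 rfl, mul_one]
  · rw [fifo_cost_eq_mul hb hc hH₀ hH₁ ht, mul_eq_left₀ hM.ne',
      div_rpow_two_mul_eq_one_iff (div_pos ht hT) hH₀ hH₁, div_eq_one_iff_eq hT.ne'] at hmin
    exact hmin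
end

section
/- Let v(t) = t (standard Brownian motion) and b > 0, c₁ > c₂ > 0. Then inf_{t > t₀} sup_{s ∈ (0,t)} Υ(s,t) equals 2bc₂ if c₁ ≥ 2c₂, and equals bc₁²/(2(c₁ − c₂)) if c₂ < c₁ < 2c₂. -/
open Set Matrix
noncomputable section

/-- Υ(s,t): Λ(b+c₂t, b+c₂t−c₁s) if k(s,t) > c₁s, else (b+c₂t)²/(2v(t)). -/
def Ups (b c₁ c₂ : ℝ) (v : ℝ → ℝ) (s t : ℝ) : ℝ :=
  if c₁ * s < kvf b c₂ v s t then Lam v s t (b + c₂ * t) (b + c₂ * t - c₁ * s)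
  else (b + c₂ * t) ^ 2 / (2 * v t)

/-! For `v(t) = t` we get `k(s,t) = s(b + c₂t)/t`, and `k(s,t) ≤ c₁s` exactly when `t ≥ t₀`.
So for `t > t₀` the bivariate branch of `Υ` never fires, `Υ(·,t)` is the constant
`(b + c₂t)²/(2t)`, and the claim is about the infimum of this one-variable function over `(t₀, ∞)`.
It equals `b²/(2t) + bc₂ + c₂²t/2`, which is minimal at `t = b/c₂`, with value `2bc₂`.
If `c₁ ≥ 2c₂` that point lies in `[t₀, ∞)`; otherwise the function increases on `[t₀, ∞)` and the
infimum is its value at `t₀`. -/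

theorem isGLB_image_Ioi_of_isLeast_image_Ici {α β : Type*} [TopologicalSpace α] [LinearOrder α]
    [OrderTopology α] [DenselyOrdered α] [NoMaxOrder α] [TopologicalSpace β] [LinearOrder β]
    [OrderClosedTopology β] {f : α → β} {a : α} {m : β} (hf : ContinuousWithinAt f (Ici a) a)
    (hm : IsLeast (f '' Ici a) m) : IsGLB (f '' Ioi a) m := by
  refine ⟨fun y hy => hm.2 (image_mono Ioi_subset_Ici_self hy), fun x hx => ?_⟩
  suffices hxa : x ≤ f a by
    obtain ⟨t, ht, rfl⟩ := hm.1
    rcases (mem_Ici.1 ht).eq_or_lt with rfl | hat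
    exacts [hxa, hx (mem_image_of_mem f hat)]
  exact ge_of_tendsto (hf.mono Ioi_subset_Ici_self)
    (eventually_nhdsWithin_of_forall fun t ht => hx (mem_image_of_mem f ht))

/-- The exponent of `P(B_t > b + c t)` for a standard Brownian motion `B`. -/
def brownianTailRate (b c t : ℝ) : ℝ := (b + c * t) ^ 2 / (2 * t)

section brownianTailRate

variable {b c : ℝ}

theorem brownianTailRate_eq {t : ℝ} (ht : t ≠ 0) :
    brownianTailRate b c t = 2 * b * c + (c * t - b) ^ 2 / (2 * t) := by
  unfold brownianTailRate
  field_simp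
  ring

theorem continuousAt_brownianTailRate {t : ℝ} (ht : t ≠ 0) :
    ContinuousAt (brownianTailRate b c) t :=
  ((continuous_const.add (continuous_const.mul continuous_id)).pow 2).continuousAt.div
    (continuous_const.mul continuous_id).continuousAt (mul_ne_zero two_ne_zero ht)

theorem two_mul_mul_le_brownianTailRate {t : ℝ} (ht : 0 < t) :
    2 * b * c ≤ brownianTailRate b c t := by
  rw [brownianTailRate_eq ht.ne']
  have : 0 ≤ (c * t - b) ^ 2 / (2 * t) := by positivity
  linarith

theorem brownianTailRate_div (hb : b ≠ 0) (hc : c ≠ 0) :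
    brownianTailRate b c (b / c) = 2 * b * c := by
  rw [brownianTailRate_eq (div_ne_zero hb hc), mul_div_cancel₀ b hc, sub_self]
  simp

theorem monotoneOn_brownianTailRate (hb : 0 < b) (hc : 0 < c) :
    MonotoneOn (brownianTailRate b c) (Ici (b / c)) := by
  intro t ht t' ht' htt'
  have hbt : b ≤ c * t := (div_le_iff₀' hc).1 ht
  have hbt' : b ≤ c * t' := (div_le_iff₀' hc).1 (le_trans ht htt')
  have ht0 : 0 < t := (div_pos hb hc).trans_le ht
  have ht0' : 0 < t' := ht0.trans_le htt'
  unfold brownianTailRate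
  rw [div_le_div_iff₀ (by positivity) (by positivity)]
  -- the difference is `2 (t' - t) ((c t)(c t') - b²)`
  have hprod : b * b ≤ c * t * (c * t') := mul_le_mul hbt hbt' hb.le (by positivity)
  nlinarith [mul_nonneg (sub_nonneg.2 htt') (sub_nonneg.2 hprod)]

theorem isLeast_brownianTailRate_of_le {a : ℝ} (hb : 0 < b) (hc : 0 < c) (ha : 0 < a)
    (hab : a ≤ b / c) : IsLeast (brownianTailRate b c '' Ici a) (2 * b * c) := by
  refine ⟨⟨b / c, hab, brownianTailRate_div hb.ne' hc.ne'⟩, ?_⟩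
  rintro _ ⟨t, ht, rfl⟩
  exact two_mul_mul_le_brownianTailRate (ha.trans_le ht)

theorem isLeast_brownianTailRate_of_ge {a : ℝ} (hb : 0 < b) (hc : 0 < c) (hab : b / c ≤ a) :
    IsLeast (brownianTailRate b c '' Ici a) (brownianTailRate b c a) := by
  refine ⟨mem_image_of_mem _ self_mem_Ici, ?_⟩
  rintro _ ⟨t, ht, rfl⟩
  exact monotoneOn_brownianTailRate hb hc hab (hab.trans ht) ht

end brownianTailRate

theorem Ups_id_eq_brownianTailRate {b c₁ c₂ s t : ℝ} (hs : 0 < s) (ht : 0 < t)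
    (hbt : b + c₂ * t ≤ c₁ * t) :
    Ups b c₁ c₂ (fun u => u) s t = brownianTailRate b c₂ t := by
  have hk : kvf b c₂ (fun u => u) s t ≤ c₁ * s := by
    rw [kvf, Gam, div_le_iff₀ ht]
    nlinarith
  rw [Ups, if_neg hk.not_gt, brownianTailRate]

theorem sSup_Ups_id_eq_brownianTailRate {b c₁ c₂ t : ℝ} (ht : 0 < t)
    (hbt : b + c₂ * t ≤ c₁ * t) :
    sSup ((fun s => Ups b c₁ c₂ (fun u => u) s t) '' Ioo 0 t) = brownianTailRate b c₂ t := by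
  rw [image_congr fun s hs => Ups_id_eq_brownianTailRate hs.1 ht hbt,
    (nonempty_Ioo.2 ht).image_const, csSup_singleton]

/-- For standard Brownian motion (v(t) = t), the tandem lower bound
inf_{t>t₀} sup_{s∈(0,t)} Υ(s,t) equals 2bc₂ when c₁ ≥ 2c₂, and bc₁²/(2(c₁−c₂)) when
c₂ < c₁ < 2c₂. -/
theorem bm_tandem (b c₁ c₂ : ℝ) (hb : 0 < b) (hc₂ : 0 < c₂) (hc : c₂ < c₁) :
    (2 * c₂ ≤ c₁ →
      sInf ((fun t => sSup ((fun s => Ups b c₁ c₂ (fun u => u) s t) '' Ioo (0 : ℝ) t)) ''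
          Ioi (b / (c₁ - c₂))) = 2 * b * c₂)
    ∧ (c₁ < 2 * c₂ →
      sInf ((fun t => sSup ((fun s => Ups b c₁ c₂ (fun u => u) s t) '' Ioo (0 : ℝ) t)) ''
          Ioi (b / (c₁ - c₂))) = b * c₁ ^ 2 / (2 * (c₁ - c₂))) := by
  have hd : 0 < c₁ - c₂ := sub_pos.2 hc
  have ht₀ : 0 < b / (c₁ - c₂) := div_pos hb hd
  have hsup : ∀ t ∈ Ioi (b / (c₁ - c₂)),
      sSup ((fun s => Ups b c₁ c₂ (fun u => u) s t) '' Ioo 0 t) = brownianTailRate b c₂ t :=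
    fun t ht => by
      have hbt : b ≤ (c₁ - c₂) * t := (div_le_iff₀' hd).1 (le_of_lt ht)
      exact sSup_Ups_id_eq_brownianTailRate (ht₀.trans ht) (by linarith)
  have hcont :
      ContinuousWithinAt (brownianTailRate b c₂) (Ici (b / (c₁ - c₂))) (b / (c₁ - c₂)) :=
    (continuousAt_brownianTailRate ht₀.ne').continuousWithinAt
  rw [image_congr hsup]
  refine ⟨fun h2 => ?_, fun h2 => ?_⟩
  · refine (isGLB_image_Ioi_of_isLeast_image_Ici hcont
      (isLeast_brownianTailRate_of_le hb hc₂ ht₀ ?_)).csInf_eq (nonempty_Ioi.image _)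
    exact div_le_div_of_nonneg_left hb.le hc₂ (by linarith)
  · have ht₀_ge : b / c₂ ≤ b / (c₁ - c₂) := div_le_div_of_nonneg_left hb.le hd (by linarith)
    rw [(isGLB_image_Ioi_of_isLeast_image_Ici hcont
      (isLeast_brownianTailRate_of_ge hb hc₂ ht₀_ge)).csInf_eq (nonempty_Ioi.image _),
      brownianTailRate]
    field_simp
    ring

end
end
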